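/- Let λ : G → ℤ/4ℤ be a group homomorphism with λ(e_l) = 2 for all 1≤l≤m and λ(f_i) ∈ {0,2} for all 1≤i≤m. Then there exists an admissible automorphism α of G that fixes every generator a_i, b_j, c_j, d_k, e_l, g_q and satisfies (λ∘α)(f_i) = 0 for all 1≤i≤m. -/
import Mathlib


open Monoid

/-- Index type for the factors of the free product `G(r,s,t,m,n)`. -/
abbrev Idx (r s t m n : ℕ) := Fin r ⊕ Fin s ⊕ Fin t ⊕ Fin m ⊕ Fin n

/-- The factors: `r` copies of `ℤ`, `s` copies of `ℤ/4 × ℤ`, `t` copies of `ℤ/4`,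
`m` copies of `ℤ/2 × ℤ`, and `n` copies of `ℤ/2` (written multiplicatively). -/
def Fac (r s t m n : ℕ) : Idx r s t m n → Type
  | .inl _ => Multiplicative ℤ
  | .inr (.inl _) => Multiplicative (ZMod 4 × ℤ)
  | .inr (.inr (.inl _)) => Multiplicative (ZMod 4)
  | .inr (.inr (.inr (.inl _))) => Multiplicative (ZMod 2 × ℤ)
  | .inr (.inr (.inr (.inr _))) => Multiplicative (ZMod 2)

instance (r s t m n : ℕ) : (i : Idx r s t m n) → Group (Fac r s t m n i)
  | .inl _ => inferInstanceAs (Group (Multiplicative ℤ))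
  | .inr (.inl _) => inferInstanceAs (Group (Multiplicative (ZMod 4 × ℤ)))
  | .inr (.inr (.inl _)) => inferInstanceAs (Group (Multiplicative (ZMod 4)))
  | .inr (.inr (.inr (.inl _))) => inferInstanceAs (Group (Multiplicative (ZMod 2 × ℤ)))
  | .inr (.inr (.inr (.inr _))) => inferInstanceAs (Group (Multiplicative (ZMod 2)))

/-- The group `G(r,s,t,m,n)`, the free product of the factors above; this is the orbifold
fundamental group `π₁^orb(V(Γ(v),G(v)))`. -/
abbrev OrbGroup (r s t m n : ℕ) := Monoid.CoprodI (Fac r s t m n)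

variable {r s t m n : ℕ}

/-- The free generator `a_i` of the `i`-th `ℤ` factor. -/
def genA (i : Fin r) : OrbGroup r s t m n :=
  CoprodI.of (show Fac r s t m n (.inl i) from Multiplicative.ofAdd (1 : ℤ))

/-- The order-4 generator `b_j` of the `j`-th `ℤ/4 × ℤ` factor. -/
def genB (j : Fin s) : OrbGroup r s t m n :=
  CoprodI.of (show Fac r s t m n (.inr (.inl j)) from
    Multiplicative.ofAdd ((1, 0) : ZMod 4 × ℤ))

/-- The infinite-order generator `c_j` of the `j`-th `ℤ/4 × ℤ` factor. -/
def genC (j : Fin s) : OrbGroup r s t m n :=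
  CoprodI.of (show Fac r s t m n (.inr (.inl j)) from
    Multiplicative.ofAdd ((0, 1) : ZMod 4 × ℤ))

/-- The order-4 generator `d_k` of the `k`-th `ℤ/4` factor. -/
def genD (k : Fin t) : OrbGroup r s t m n :=
  CoprodI.of (show Fac r s t m n (.inr (.inr (.inl k))) from
    Multiplicative.ofAdd (1 : ZMod 4))

/-- The order-2 generator `e_l` of the `l`-th `ℤ/2 × ℤ` factor. -/
def genE (l : Fin m) : OrbGroup r s t m n :=
  CoprodI.of (show Fac r s t m n (.inr (.inr (.inr (.inl l)))) from
    Multiplicative.ofAdd ((1, 0) : ZMod 2 × ℤ))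

/-- The infinite-order generator `f_l` of the `l`-th `ℤ/2 × ℤ` factor. -/
def genF (l : Fin m) : OrbGroup r s t m n :=
  CoprodI.of (show Fac r s t m n (.inr (.inr (.inr (.inl l)))) from
    Multiplicative.ofAdd ((0, 1) : ZMod 2 × ℤ))

/-- The order-2 generator `g_q` of the `q`-th `ℤ/2` factor. -/
def genG (q : Fin n) : OrbGroup r s t m n :=
  CoprodI.of (show Fac r s t m n (.inr (.inr (.inr (.inr q)))) from
    Multiplicative.ofAdd (1 : ZMod 2))

/-- An automorphism of `G(r,s,t,m,n)` is admissible (the algebraic characterization of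
realizable automorphisms from Lemma 2.2) if it sends each torsion-related generator to a
conjugate of the appropriate normal form. -/
def Admissible (α : OrbGroup r s t m n ≃* OrbGroup r s t m n) : Prop :=
  ∃ (σ : Equiv.Perm (Fin s)) (τ : Equiv.Perm (Fin t)) (γ : Equiv.Perm (Fin m))
    (ξ : Equiv.Perm (Fin n))
    (x : Fin s → OrbGroup r s t m n) (y : Fin t → OrbGroup r s t m n)
    (u : Fin m → OrbGroup r s t m n) (z : Fin n → OrbGroup r s t m n)
    (ε : Fin s → ℤ) (δ : Fin t → ℤ) (ε' : Fin m → ℤ) (δ' : Fin n → ℤ)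
    (v : Fin s → ℕ) (w : Fin m → ℕ),
    (∀ j, ε j = 1 ∨ ε j = -1) ∧ (∀ k, δ k = 1 ∨ δ k = -1) ∧
    (∀ l, ε' l = 1 ∨ ε' l = -1) ∧ (∀ q, δ' q = 1 ∨ δ' q = -1) ∧
    (∀ j, v j < 4) ∧ (∀ l, w l < 2) ∧
    (∀ j, α (genB j) = x j * genB (σ j) ^ ε j * (x j)⁻¹) ∧
    (∀ j, α (genC j) = x j * genB (σ j) ^ v j * genC (σ j) ^ ε j * (x j)⁻¹) ∧
    (∀ k, α (genD k) = y k * genD (τ k) ^ δ k * (y k)⁻¹) ∧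
    (∀ l, α (genE l) = u l * genE (γ l) ^ ε' l * (u l)⁻¹) ∧
    (∀ l, α (genF l) = u l * genE (γ l) ^ w l * genF (γ l) ^ ε' l * (u l)⁻¹) ∧
    (∀ q, α (genG q) = z q * genG (ξ q) ^ δ' q * (z q)⁻¹)

/-- `λ` is "finite injective": its restriction to each finite cyclic subgroup
`⟨b_j⟩`, `⟨d_k⟩`, `⟨e_l⟩`, `⟨g_q⟩` is injective. -/
def InjOnTorsion {r s t m n : ℕ}
    (lam : OrbGroup r s t m n →* Multiplicative (ZMod 4)) : Prop :=
  (∀ j : Fin s, Set.InjOn lam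
    ((Subgroup.zpowers (genB j) : Subgroup (OrbGroup r s t m n)) : Set (OrbGroup r s t m n))) ∧
  (∀ k : Fin t, Set.InjOn lam
    ((Subgroup.zpowers (genD k) : Subgroup (OrbGroup r s t m n)) : Set (OrbGroup r s t m n))) ∧
  (∀ l : Fin m, Set.InjOn lam
    ((Subgroup.zpowers (genE l) : Subgroup (OrbGroup r s t m n)) : Set (OrbGroup r s t m n))) ∧
  (∀ q : Fin n, Set.InjOn lam
    ((Subgroup.zpowers (genG q) : Subgroup (OrbGroup r s t m n)) : Set (OrbGroup r s t m n)))


/-! Auxiliary constructions for `normalize_f_values`. -/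

/-- The additive twist `(a, b) ↦ (a + c·b, b)` on `ZMod 2 × ℤ`. -/
def twAdd (c : ZMod 2) : (ZMod 2 × ℤ) →+ (ZMod 2 × ℤ) where
  toFun p := (p.1 + c * (p.2 : ZMod 2), p.2)
  map_zero' := by simp
  map_add' p q := by
    show ((p.1 + q.1) + c * ((p.2 + q.2 : ℤ) : ZMod 2), p.2 + q.2) = _
    have : ((p.2 + q.2 : ℤ) : ZMod 2) = (p.2 : ZMod 2) + (q.2 : ZMod 2) := by push_cast; ring
    rw [this, Prod.mk_add_mk]
    congr 1
    ring

lemma twAdd_invol (c : ZMod 2) (p : ZMod 2 × ℤ) : twAdd c (twAdd c p) = p := by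
  have h : ∀ a : ZMod 2, a + a = 0 := by decide
  obtain ⟨a, b⟩ := p
  simp only [twAdd, AddMonoidHom.coe_mk, ZeroHom.coe_mk]
  ext
  · show a + c * (b : ZMod 2) + c * (b : ZMod 2) = a
    rw [add_assoc, h, add_zero]
  · rfl

/-- The twist as a multiplicative automorphism. -/
def twMul (c : ZMod 2) : Multiplicative (ZMod 2 × ℤ) ≃* Multiplicative (ZMod 2 × ℤ) :=
  AddEquiv.toMultiplicative
    { toFun := twAdd c
      invFun := twAdd c
      left_inv := twAdd_invol c
      right_inv := twAdd_invol c
      map_add' := (twAdd c).map_add }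

/-- Family of monoid homs implementing `f_l ↦ e_l^{w l} f_l`, identity elsewhere. -/
def twFam {r s t m n : ℕ} (w : Fin m → ZMod 2) :
    (i : Idx r s t m n) → Fac r s t m n i →* OrbGroup r s t m n
  | .inl _ => CoprodI.of
  | .inr (.inl _) => CoprodI.of
  | .inr (.inr (.inl _)) => CoprodI.of
  | .inr (.inr (.inr (.inl l))) => CoprodI.of.comp (show Multiplicative (ZMod 2 × ℤ) →* Fac r s t m n (Sum.inr (Sum.inr (Sum.inr (Sum.inl l)))) from (twMul (w l)).toMonoidHom)
  | .inr (.inr (.inr (.inr _))) => CoprodI.of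

/-- The induced endomorphism of the free product. -/
def twHom {r s t m n : ℕ} (w : Fin m → ZMod 2) :
    OrbGroup r s t m n →* OrbGroup r s t m n :=
  CoprodI.lift (twFam w)

lemma twMul_invol (c : ZMod 2) (x : Multiplicative (ZMod 2 × ℤ)) :
    twMul c (twMul c x) = x := twAdd_invol c x

lemma twHom_of {r s t m n : ℕ} (w : Fin m → ZMod 2) (i : Idx r s t m n)
    (x : Fac r s t m n i) : twHom w (CoprodI.of x) = twFam w i x := by
  rw [twHom, CoprodI.lift_of]

lemma twHom_invol {r s t m n : ℕ} (w : Fin m → ZMod 2) (x : OrbGroup r s t m n) :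
    twHom w (twHom w x) = x := by
  have h : (twHom w).comp (twHom w) = MonoidHom.id (OrbGroup r s t m n) := by
    apply CoprodI.ext_hom
    intro i
    ext y
    rcases i with i | j | k | l | q <;>
      simp only [MonoidHom.comp_apply, MonoidHom.id_apply, twHom_of, twFam,
        MonoidHom.coe_comp, Function.comp_apply, MulEquiv.coe_toMonoidHom]
    exact congrArg CoprodI.of (twMul_invol (w l) y)
  calc twHom w (twHom w x) = ((twHom w).comp (twHom w)) x := rfl
    _ = x := by rw [h]; rfl

/-- The twist automorphism of the free product. -/
def twEquiv {r s t m n : ℕ} (w : Fin m → ZMod 2) :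
    OrbGroup r s t m n ≃* OrbGroup r s t m n where
  toFun := twHom w
  invFun := twHom w
  left_inv := twHom_invol w
  right_inv := twHom_invol w
  map_mul' := (twHom w).map_mul

lemma twEquiv_genA {r s t m n : ℕ} (w : Fin m → ZMod 2) (i : Fin r) :
    twEquiv w (genA i : OrbGroup r s t m n) = genA i := by
  show twHom w (genA i) = genA i
  rw [genA, twHom_of]
  rfl

lemma twEquiv_genB {r s t m n : ℕ} (w : Fin m → ZMod 2) (j : Fin s) :
    twEquiv w (genB j : OrbGroup r s t m n) = genB j := by
  show twHom w (genB j) = genB j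
  rw [genB, twHom_of]
  rfl

lemma twEquiv_genC {r s t m n : ℕ} (w : Fin m → ZMod 2) (j : Fin s) :
    twEquiv w (genC j : OrbGroup r s t m n) = genC j := by
  show twHom w (genC j) = genC j
  rw [genC, twHom_of]
  rfl

lemma twEquiv_genD {r s t m n : ℕ} (w : Fin m → ZMod 2) (k : Fin t) :
    twEquiv w (genD k : OrbGroup r s t m n) = genD k := by
  show twHom w (genD k) = genD k
  rw [genD, twHom_of]
  rfl

lemma twEquiv_genG {r s t m n : ℕ} (w : Fin m → ZMod 2) (q : Fin n) :
    twEquiv w (genG q : OrbGroup r s t m n) = genG q := by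
  show twHom w (genG q) = genG q
  rw [genG, twHom_of]
  rfl

lemma twMul_apply (c : ZMod 2) (p : ZMod 2 × ℤ) :
    twMul c (Multiplicative.ofAdd p) =
      Multiplicative.ofAdd (p.1 + c * (p.2 : ZMod 2), p.2) := rfl

lemma ofAdd_pow_mul (k : ℕ) :
    (Multiplicative.ofAdd ((1, 0) : ZMod 2 × ℤ)) ^ k *
      Multiplicative.ofAdd ((0, 1) : ZMod 2 × ℤ) =
      Multiplicative.ofAdd (((k : ZMod 2), 1) : ZMod 2 × ℤ) := by
  rw [← ofAdd_nsmul, ← ofAdd_add]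
  congr 1
  ext
  · show (k • ((1, 0) : ZMod 2 × ℤ)).1 + 0 = (k : ZMod 2)
    simp
  · show (k • ((1, 0) : ZMod 2 × ℤ)).2 + 1 = 1
    simp

lemma genE_pow_mul_genF {r s t m n : ℕ} (l : Fin m) (k : ℕ) :
    (genE l : OrbGroup r s t m n) ^ k * genF l =
      CoprodI.of (show Fac r s t m n (.inr (.inr (.inr (.inl l)))) from
        Multiplicative.ofAdd (((k : ZMod 2), 1) : ZMod 2 × ℤ)) := by
  rw [genE, genF, ← map_pow, ← map_mul]
  exact congrArg CoprodI.of (ofAdd_pow_mul k)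

lemma twMul_e (c : ZMod 2) :
    twMul c (Multiplicative.ofAdd ((1, 0) : ZMod 2 × ℤ)) =
      Multiplicative.ofAdd ((1, 0) : ZMod 2 × ℤ) := by
  rw [twMul_apply]; norm_num

lemma twMul_f (c : ZMod 2) :
    twMul c (Multiplicative.ofAdd ((0, 1) : ZMod 2 × ℤ)) =
      Multiplicative.ofAdd ((c, 1) : ZMod 2 × ℤ) := by
  rw [twMul_apply]; norm_num

lemma twEquiv_genE {r s t m n : ℕ} (w : Fin m → ZMod 2) (l : Fin m) :
    twEquiv w (genE l : OrbGroup r s t m n) = genE l := by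
  show twHom w (genE l) = genE l
  rw [genE, twHom_of]
  exact congrArg CoprodI.of (twMul_e (w l))

lemma twEquiv_genF {r s t m n : ℕ} (w : Fin m → ZMod 2) (l : Fin m) (k : ℕ)
    (hk : (k : ZMod 2) = w l) :
    twEquiv w (genF l : OrbGroup r s t m n) = genE l ^ k * genF l := by
  rw [genE_pow_mul_genF, hk]
  show twHom w (genF l) = _
  rw [genF, twHom_of]
  exact congrArg CoprodI.of (twMul_f (w l))

/-- Normalization step in the proof of Lemma 2.3: if `λ(e_l) = 2` for all `l` and each
`λ(f_i) ∈ {0, 2}`, then there is an admissible automorphism `α` of `G` fixing every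
generator `a_i, b_j, c_j, d_k, e_l, g_q` with `(λ ∘ α)(f_i) = 0` for all `i`. -/
theorem normalize_f_values {r s t m n : ℕ}
    (lam : OrbGroup r s t m n →* Multiplicative (ZMod 4))
    (he : ∀ l : Fin m, lam (genE l) = Multiplicative.ofAdd (2 : ZMod 4))
    (hf : ∀ i : Fin m, lam (genF i) = Multiplicative.ofAdd (0 : ZMod 4) ∨
      lam (genF i) = Multiplicative.ofAdd (2 : ZMod 4)) :
    ∃ α : OrbGroup r s t m n ≃* OrbGroup r s t m n, Admissible α ∧
      (∀ i : Fin r, α (genA i) = genA i) ∧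
      (∀ j : Fin s, α (genB j) = genB j) ∧
      (∀ j : Fin s, α (genC j) = genC j) ∧
      (∀ k : Fin t, α (genD k) = genD k) ∧
      (∀ l : Fin m, α (genE l) = genE l) ∧
      (∀ q : Fin n, α (genG q) = genG q) ∧
      (∀ i : Fin m, lam (α (genF i)) = Multiplicative.ofAdd (0 : ZMod 4)) := by
  classical
  have key : ∀ i : Fin m, ∃ k : ℕ, k < 2 ∧
      lam (genE i) ^ k * lam (genF i) = Multiplicative.ofAdd (0 : ZMod 4) := by
    intro i
    rcases hf i with h | h
    · exact ⟨0, by norm_num, by rw [h]; simp⟩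
    · refine ⟨1, by norm_num, ?_⟩
      rw [h, he i, pow_one, ← ofAdd_add]
      decide
  choose wN hlt hkey using key
  set w : Fin m → ZMod 2 := fun i => (wN i : ZMod 2) with hw
  refine ⟨twEquiv w,
    ⟨1, 1, 1, 1, fun _ => 1, fun _ => 1, fun _ => 1, fun _ => 1,
      fun _ => 1, fun _ => 1, fun _ => 1, fun _ => 1, fun _ => 0, wN,
      fun _ => Or.inl rfl, fun _ => Or.inl rfl, fun _ => Or.inl rfl, fun _ => Or.inl rfl,
      fun _ => by norm_num, hlt, ?_, ?_, ?_, ?_, ?_, ?_⟩,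
    twEquiv_genA w, twEquiv_genB w, twEquiv_genC w, twEquiv_genD w, twEquiv_genE w,
    twEquiv_genG w, ?_⟩
  · intro j; simp [twEquiv_genB]
  · intro j; simp [twEquiv_genC]
  · intro k; simp [twEquiv_genD]
  · intro l; simp [twEquiv_genE]
  · intro l
    rw [twEquiv_genF w l (wN l) (by rw [hw])]
    simp
  · intro q; simp [twEquiv_genG]
  · intro i
    rw [twEquiv_genF w i (wN i) (by rw [hw]), map_mul, map_pow]
    exact hkey i
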